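/- arXiv:1702.00758 — 2 statements merged into one kernel-verified Lean document; each statement's English description precedes it below -/
import Mathlib

section
/- Let g_i, g_j ∈ ℝ^K have all coordinates nonzero, let s ∈ {0,1}, α > 0, w > 0, η > 0, and define the SGD update g'_i = g_i - ηwα(σ(⟨g_i,g_j⟩) - s)·g_j and g'_j = g_j - ηwα(σ(⟨g_i,g_j⟩) - s)·g_i, where σ(x) = 1/(1+exp(-αx)). Let h = sgn applied coordinatewise (sgn(x)=1 if x ≥ 0, else -1). Then for every coordinate k: if s = 0 then sgn(g'_i(k))·sgn(g'_j(k)) ≤ sgn(g_i(k))·sgn(g_j(k)), and if s = 1 then sgn(g'_i(k))·sgn(g'_j(k)) ≥ sgn(g_i(k))·sgn(g_j(k)). -/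
noncomputable def sgn (x : ℝ) : ℝ := if 0 ≤ x then 1 else -1

lemma sgn_of_pos {x : ℝ} (h : 0 < x) : sgn x = 1 := by simp [sgn, h.le]

lemma sgn_of_neg {x : ℝ} (h : x < 0) : sgn x = -1 := by simp [sgn, not_le.mpr h]

lemma sgn_cases (x : ℝ) : sgn x = 1 ∨ sgn x = -1 := by
  unfold sgn; split <;> simp

theorem sgd_step_coordinate (K : ℕ) (g₁ g₂ : Fin K → ℝ)
    (hg₁ : ∀ k, g₁ k ≠ 0) (hg₂ : ∀ k, g₂ k ≠ 0)
    (s α w η : ℝ) (hs : s = 0 ∨ s = 1) (hα : 0 < α) (hw : 0 < w) (hη : 0 < η)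
    (c : ℝ)
    (hc : c = η * w * α * (1 / (1 + Real.exp (-α * ∑ k, g₁ k * g₂ k)) - s))
    (g₁' g₂' : Fin K → ℝ)
    (hg₁' : g₁' = fun k => g₁ k - c * g₂ k)
    (hg₂' : g₂' = fun k => g₂ k - c * g₁ k) :
    ∀ k : Fin K,
      (s = 0 → sgn (g₁' k) * sgn (g₂' k) ≤ sgn (g₁ k) * sgn (g₂ k)) ∧
      (s = 1 → sgn (g₁ k) * sgn (g₂ k) ≤ sgn (g₁' k) * sgn (g₂' k)) := by
  intro k
  set E := Real.exp (-α * ∑ k, g₁ k * g₂ k) with hE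
  have hEpos : 0 < E := Real.exp_pos _
  have hden : 0 < 1 + E := by linarith
  have hσpos : 0 < 1 / (1 + E) := by positivity
  have hσlt : 1 / (1 + E) < 1 := by
    rw [div_lt_one hden]; linarith
  have hηwα : 0 < η * w * α := by positivity
  have h1' : g₁' k = g₁ k - c * g₂ k := by rw [hg₁']
  have h2' : g₂' k = g₂ k - c * g₁ k := by rw [hg₂']
  have hLB : ∀ x y : ℝ, -1 ≤ sgn x * sgn y := by
    intro x y
    rcases sgn_cases x with h | h <;> rcases sgn_cases y with h' | h' <;>
      rw [h, h'] <;> norm_num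
  have hUB : ∀ x y : ℝ, sgn x * sgn y ≤ 1 := by
    intro x y
    rcases sgn_cases x with h | h <;> rcases sgn_cases y with h' | h' <;>
      rw [h, h'] <;> norm_num
  rcases lt_or_gt_of_ne (hg₁ k) with h1 | h1 <;>
    rcases lt_or_gt_of_ne (hg₂ k) with h2 | h2
  · -- both negative
    constructor
    · intro _; rw [sgn_of_neg h1, sgn_of_neg h2]; have := hUB (g₁' k) (g₂' k); linarith
    · intro hs1
      have hcneg : c ≤ 0 := by
        rw [hc, hs1]; nlinarith
      have : g₁' k < 0 := by rw [h1']; nlinarith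
      have h2n : g₂' k < 0 := by rw [h2']; nlinarith
      rw [sgn_of_neg h1, sgn_of_neg h2, sgn_of_neg this, sgn_of_neg h2n]
  · -- g₁ < 0, g₂ > 0
    constructor
    · intro hs0
      have hcpos : 0 ≤ c := by
        rw [hc, hs0]; nlinarith
      have ha : g₁' k < 0 := by rw [h1']; nlinarith
      have hb : 0 < g₂' k := by rw [h2']; nlinarith
      rw [sgn_of_neg h1, sgn_of_pos h2, sgn_of_neg ha, sgn_of_pos hb]
    · intro _; rw [sgn_of_neg h1, sgn_of_pos h2]
      have := hLB (g₁' k) (g₂' k); linarith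
  · -- g₁ > 0, g₂ < 0
    constructor
    · intro hs0
      have hcpos : 0 ≤ c := by
        rw [hc, hs0]; nlinarith
      have ha : 0 < g₁' k := by rw [h1']; nlinarith
      have hb : g₂' k < 0 := by rw [h2']; nlinarith
      rw [sgn_of_pos h1, sgn_of_neg h2, sgn_of_pos ha, sgn_of_neg hb]
    · intro _; rw [sgn_of_pos h1, sgn_of_neg h2]
      have := hLB (g₁' k) (g₂' k); linarith
  · -- both positive
    constructor
    · intro _; rw [sgn_of_pos h1, sgn_of_pos h2]; have := hUB (g₁' k) (g₂' k); linarith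
    · intro hs1
      have hcneg : c ≤ 0 := by
        rw [hc, hs1]; nlinarith
      have ha : 0 < g₁' k := by rw [h1']; nlinarith
      have hb : 0 < g₂' k := by rw [h2']; nlinarith
      rw [sgn_of_pos h1, sgn_of_pos h2, sgn_of_pos ha, sgn_of_pos hb]
end

section
/- Under the hypotheses of the previous statement (one SGD step on the smoothed pairwise loss), the inner product of the binarized codes satisfies: ⟨sgn(g'_i), sgn(g'_j)⟩ ≥ ⟨sgn(g_i), sgn(g_j)⟩ if s = 1, and ⟨sgn(g'_i), sgn(g'_j)⟩ ≤ ⟨sgn(g_i), sgn(g_j)⟩ if s = 0. -/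
lemma key_neg (x y c : ℝ) (hx : x ≠ 0) (hy : y ≠ 0) (hc : c < 0) :
    sgn x * sgn y ≤ sgn (x - c*y) * sgn (y - c*x) := by
  rcases hx.lt_or_gt with hx'|hx' <;> rcases hy.lt_or_gt with hy'|hy' <;>
    unfold sgn <;> split_ifs <;> nlinarith

lemma key_pos (x y c : ℝ) (hx : x ≠ 0) (hy : y ≠ 0) (hc : 0 < c) :
    sgn (x - c*y) * sgn (y - c*x) ≤ sgn x * sgn y := by
  rcases hx.lt_or_gt with hx'|hx' <;> rcases hy.lt_or_gt with hy'|hy' <;>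
    unfold sgn <;> split_ifs <;> nlinarith

theorem sgd_step_inner_product (K : ℕ) (g₁ g₂ : Fin K → ℝ)
    (hg₁ : ∀ k, g₁ k ≠ 0) (hg₂ : ∀ k, g₂ k ≠ 0)
    (s α w η : ℝ) (hs : s = 0 ∨ s = 1) (hα : 0 < α) (hw : 0 < w) (hη : 0 < η)
    (c : ℝ)
    (hc : c = η * w * α * (1 / (1 + Real.exp (-α * ∑ k, g₁ k * g₂ k)) - s))
    (g₁' g₂' : Fin K → ℝ)
    (hg₁' : g₁' = fun k => g₁ k - c * g₂ k)
    (hg₂' : g₂' = fun k => g₂ k - c * g₁ k) :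
    (s = 1 → ∑ k, sgn (g₁ k) * sgn (g₂ k) ≤ ∑ k, sgn (g₁' k) * sgn (g₂' k)) ∧
    (s = 0 → ∑ k, sgn (g₁' k) * sgn (g₂' k) ≤ ∑ k, sgn (g₁ k) * sgn (g₂ k)) := by
  have hexp : 0 < Real.exp (-α * ∑ k, g₁ k * g₂ k) := Real.exp_pos _
  have hden : 0 < 1 + Real.exp (-α * ∑ k, g₁ k * g₂ k) := by linarith
  have hσpos : 0 < 1 / (1 + Real.exp (-α * ∑ k, g₁ k * g₂ k)) := by positivity
  have hσlt : 1 / (1 + Real.exp (-α * ∑ k, g₁ k * g₂ k)) < 1 := by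
    rw [div_lt_one hden]; linarith
  have hηwα : 0 < η * w * α := by positivity
  subst hg₁' hg₂'
  constructor
  · intro hs1
    have hcneg : c < 0 := by
      rw [hc, hs1]; exact mul_neg_of_pos_of_neg hηwα (by linarith)
    exact Finset.sum_le_sum fun k _ => key_neg _ _ _ (hg₁ k) (hg₂ k) hcneg
  · intro hs0
    have hcpos : 0 < c := by
      rw [hc, hs0]; exact mul_pos hηwα (by linarith)
    exact Finset.sum_le_sum fun k _ => key_pos _ _ _ (hg₁ k) (hg₂ k) hcpos
end
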